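/- arXiv:1811.03986 — 7 statements merged into one kernel-verified Lean document; each statement's English description precedes it below -/
import Mathlib

section
/- Let A₁ ∈ ℝ^{n₁×n₁}, b₁ ∈ ℝ^{n₁}, c₁ ∈ ℝ^{1×n₁} and A₂ ∈ ℝ^{n₂×n₂}, b₂ ∈ ℝ^{n₂}, c₂ ∈ ℝ^{1×n₂}. Then for every t ∈ ℝ, (c₁ e^{A₁t} b₁) · (c₂ e^{A₂t} b₂) = (c₁ ⊗ c₂) e^{(A₁ ⊕ A₂)t} (b₁ ⊗ b₂). -/
/-!
The two summands `A₁ ⊗ I` and `I ⊗ A₂` of the Kronecker sum commute, so the exponential of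
their sum is the product of their exponentials. Since `X ↦ X ⊗ I` and `Y ↦ I ⊗ Y` are continuous
ring homomorphisms they commute with `exp`, and the mixed-product rule
`(X ⊗ I)(I ⊗ Y) = X ⊗ Y` gives `e^{(A₁ ⊕ A₂)t} = e^{A₁t} ⊗ e^{A₂t}`. The mixed-product rule once
more turns `(c₁ ⊗ c₂) (e^{A₁t} ⊗ e^{A₂t}) (b₁ ⊗ b₂)` into the `1 × 1` Kronecker product of the
two impulse responses.
-/

open Matrix Kronecker

/-- Kronecker sum of two square matrices: `X ⊕ Y = X ⊗ I + I ⊗ Y`. -/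
noncomputable def kroneckerSum {n m : ℕ} (X : Matrix (Fin n) (Fin n) ℝ)
    (Y : Matrix (Fin m) (Fin m) ℝ) : Matrix (Fin n × Fin m) (Fin n × Fin m) ℝ :=
  X ⊗ₖ (1 : Matrix (Fin m) (Fin m) ℝ) + (1 : Matrix (Fin n) (Fin n) ℝ) ⊗ₖ Y

open NormedSpace

namespace Matrix

variable {m n α : Type*} [Fintype m] [DecidableEq m] [Fintype n] [DecidableEq n]

theorem map_exp [NormedRing α] [NormedAlgebra ℚ α] [CompleteSpace α] {F : Type*}
    [FunLike F (Matrix m m α) (Matrix n n α)] [RingHomClass F (Matrix m m α) (Matrix n n α)]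
    (f : F) (hf : Continuous f) (X : Matrix m m α) : f (exp X) = exp (f X) := by
  -- instance search does not recognise the operator-norm uniformity as the complete entrywise one
  open scoped Matrix.Norms.Operator in
  exact @NormedSpace.map_exp _ _ _ _ (Matrix.instCompleteSpace m m α) _ _ _ _ _ f hf X

section CommSemiring

variable [CommSemiring α]

def kroneckerOneRingHom : Matrix m m α →+* Matrix (m × n) (m × n) α where
  toFun X := X ⊗ₖ 1
  map_one' := one_kronecker_one
  map_mul' X Y := by rw [← mul_kronecker_mul, one_mul]
  map_zero' := zero_kronecker _
  map_add' X Y := add_kronecker _ _ _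

def oneKroneckerRingHom : Matrix n n α →+* Matrix (m × n) (m × n) α where
  toFun Y := 1 ⊗ₖ Y
  map_one' := one_kronecker_one
  map_mul' X Y := by rw [← mul_kronecker_mul, one_mul]
  map_zero' := kronecker_zero _
  map_add' X Y := kronecker_add _ _ _

theorem commute_kronecker_one_one_kronecker (X : Matrix m m α) (Y : Matrix n n α) :
    Commute (X ⊗ₖ (1 : Matrix n n α)) ((1 : Matrix m m α) ⊗ₖ Y) := by
  simp only [Commute, SemiconjBy, ← mul_kronecker_mul, one_mul, mul_one]

variable [TopologicalSpace α] [ContinuousMul α]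

theorem continuous_kroneckerOneRingHom :
    Continuous (kroneckerOneRingHom : Matrix m m α →+* Matrix (m × n) (m × n) α) :=
  continuous_matrix fun i j => (continuous_apply_apply i.1 j.1).mul continuous_const

theorem continuous_oneKroneckerRingHom :
    Continuous (oneKroneckerRingHom : Matrix n n α →+* Matrix (m × n) (m × n) α) :=
  continuous_matrix fun i j => continuous_const.mul (continuous_apply_apply i.2 j.2)

end CommSemiring

variable [NormedCommRing α] [NormedAlgebra ℚ α] [CompleteSpace α]

theorem exp_kronecker_one (X : Matrix m m α) :
    exp (X ⊗ₖ (1 : Matrix n n α)) = exp X ⊗ₖ 1 :=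
  (map_exp kroneckerOneRingHom continuous_kroneckerOneRingHom X).symm

theorem exp_one_kronecker (Y : Matrix n n α) :
    exp ((1 : Matrix m m α) ⊗ₖ Y) = 1 ⊗ₖ exp Y :=
  (map_exp oneKroneckerRingHom continuous_oneKroneckerRingHom Y).symm

theorem exp_kronecker_one_add_one_kronecker (X : Matrix m m α) (Y : Matrix n n α) :
    exp (X ⊗ₖ 1 + 1 ⊗ₖ Y) = exp X ⊗ₖ exp Y := by
  rw [exp_add_of_commute _ _ (commute_kronecker_one_one_kronecker X Y), exp_kronecker_one,
    exp_one_kronecker, ← mul_kronecker_mul, one_mul, mul_one]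

end Matrix

theorem smul_kroneckerSum {n m : ℕ} (t : ℝ) (X : Matrix (Fin n) (Fin n) ℝ)
    (Y : Matrix (Fin m) (Fin m) ℝ) :
    t • kroneckerSum X Y = kroneckerSum (t • X) (t • Y) := by
  rw [kroneckerSum, kroneckerSum, smul_add, smul_kronecker, kronecker_smul]

theorem exp_kroneckerSum {n m : ℕ} (X : Matrix (Fin n) (Fin n) ℝ)
    (Y : Matrix (Fin m) (Fin m) ℝ) : exp (kroneckerSum X Y) = exp X ⊗ₖ exp Y :=
  exp_kronecker_one_add_one_kronecker X Y

/-- Impulse response product: the product of two impulse responses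
`(c₁ e^{A₁ t} b₁) (c₂ e^{A₂ t} b₂)` equals the impulse response of the Kronecker
compound system `(A₁ ⊕ A₂, b₁ ⊗ b₂, c₁ ⊗ c₂)`. -/
theorem impulse_response_product {n₁ n₂ : ℕ}
    (A₁ : Matrix (Fin n₁) (Fin n₁) ℝ) (b₁ : Matrix (Fin n₁) (Fin 1) ℝ)
    (c₁ : Matrix (Fin 1) (Fin n₁) ℝ)
    (A₂ : Matrix (Fin n₂) (Fin n₂) ℝ) (b₂ : Matrix (Fin n₂) (Fin 1) ℝ)
    (c₂ : Matrix (Fin 1) (Fin n₂) ℝ) (t : ℝ) :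
    (c₁ * NormedSpace.exp (t • A₁) * b₁) 0 0 *
      (c₂ * NormedSpace.exp (t • A₂) * b₂) 0 0 =
    ((c₁ ⊗ₖ c₂) * NormedSpace.exp (t • kroneckerSum A₁ A₂) * (b₁ ⊗ₖ b₂)) (0, 0) (0, 0) := by
  rw [smul_kroneckerSum, exp_kroneckerSum, ← mul_kronecker_mul, ← mul_kronecker_mul,
    kronecker_apply]
end

section
/- Let g : ℝ → ℝ be continuous on [0,∞) and satisfy g(t) = 0 for all t < 0. Then g(t) ≥ 0 for all t ≥ 0 if and only if for every bounded measurable nondecreasing function u : ℝ → ℝ with u(t) ≥ 0 for all t and u(t) = 0 for all t ≤ 0, the output y = g ∗ u is nonnegative and nondecreasing on ℝ. -/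
/-!
If `g ≥ 0`, then `g ∗ u ≥ 0`, and writing `(g ∗ u)(t) = ∫ g(σ) u(t − σ) dσ` shows that `g ∗ u`
inherits the monotonicity of `u`. Conversely, the response of the system to the unit step is the
running integral `t ↦ ∫_{σ < t} g(σ) dσ`; if it is nondecreasing, its right derivative `g(t₀)`
at any `t₀ ≥ 0` is nonnegative.
-/

open MeasureTheory

noncomputable def conv (g u : ℝ → ℝ) (t : ℝ) : ℝ :=
  ∫ τ : ℝ, g (t - τ) * u τ

open Set Topology

lemma conv_eq_integral_mul_sub (g u : ℝ → ℝ) (t : ℝ) :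
    conv g u t = ∫ σ : ℝ, g σ * u (t - σ) := by
  rw [conv, ← integral_sub_left_eq_self _ volume t]
  simp only [sub_sub_cancel]

lemma conv_nonneg {g u : ℝ → ℝ} (hg : ∀ s, 0 ≤ g s) (hu : ∀ s, 0 ≤ u s) (t : ℝ) :
    0 ≤ conv g u t :=
  integral_nonneg fun _ => mul_nonneg (hg _) (hu _)

lemma integrableOn_Iio_of_continuousOn_Ici {g : ℝ → ℝ} (hg_cont : ContinuousOn g (Ici 0))
    (hg_causal : ∀ s < 0, g s = 0) (t : ℝ) : IntegrableOn g (Iio t) := by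
  have h_neg : IntegrableOn g (Iio 0) :=
    (integrableOn_congr_fun (fun s hs => (hg_causal s hs).symm) measurableSet_Iio).mp
      integrableOn_zero
  have h_pos : IntegrableOn g (Ico 0 t) :=
    ((hg_cont.mono Icc_subset_Ici_self).integrableOn_Icc).mono_set Ico_subset_Icc_self
  exact (h_neg.union h_pos).mono_set Iio_subset_Iio_union_Ico

lemma integrable_mul_sub {g u : ℝ → ℝ} {t C : ℝ} (hg : IntegrableOn g (Iio t))
    (hu : Measurable u) (hC : ∀ s, |u s| ≤ C) (hu_zero : ∀ s ≤ 0, u s = 0) :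
    Integrable fun σ => g σ * u (t - σ) := by
  have h_eq : (fun σ => g σ * u (t - σ)) = fun σ => u (t - σ) * (Iio t).indicator g σ := by
    funext σ
    by_cases hσ : σ < t
    · simp [hσ, mul_comm]
    · simp [hσ, hu_zero (t - σ) (by linarith)]
  rw [h_eq]
  exact (hg.integrable_indicator measurableSet_Iio).bdd_mul
    (hu.comp (measurable_const.sub measurable_id)).aestronglyMeasurable
    (ae_of_all _ fun σ => (Real.norm_eq_abs _).trans_le (hC _))

lemma monotone_conv {g u : ℝ → ℝ} {C : ℝ} (hg : ∀ s, 0 ≤ g s)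
    (hg_int : ∀ t, IntegrableOn g (Iio t)) (hu : Measurable u) (hC : ∀ s, |u s| ≤ C)
    (hu_mono : Monotone u) (hu_zero : ∀ s ≤ 0, u s = 0) : Monotone (conv g u) := by
  intro s t hst
  simp only [conv_eq_integral_mul_sub]
  exact integral_mono (integrable_mul_sub (hg_int s) hu hC hu_zero)
    (integrable_mul_sub (hg_int t) hu hC hu_zero)
    fun σ => mul_le_mul_of_nonneg_left (hu_mono (sub_le_sub_right hst σ)) (hg σ)

noncomputable def heaviside : ℝ → ℝ := (Ioi 0).indicator 1

lemma measurable_heaviside : Measurable heaviside :=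
  measurable_const.indicator measurableSet_Ioi

lemma heaviside_nonneg (t : ℝ) : 0 ≤ heaviside t :=
  indicator_nonneg (fun _ _ => zero_le_one) t

lemma abs_heaviside_le_one (t : ℝ) : |heaviside t| ≤ 1 := by
  rw [abs_of_nonneg (heaviside_nonneg t)]
  exact indicator_le_self' (fun _ _ => zero_le_one) t

lemma heaviside_of_nonpos {t : ℝ} (ht : t ≤ 0) : heaviside t = 0 :=
  indicator_of_notMem (not_lt.mpr ht) _

lemma monotone_heaviside : Monotone heaviside := by
  intro s t hst
  by_cases hs : 0 < s
  · simp [heaviside, hs, hs.trans_le hst]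
  · rw [heaviside_of_nonpos (not_lt.mp hs)]
    exact heaviside_nonneg t

lemma conv_heaviside (g : ℝ → ℝ) (t : ℝ) : conv g heaviside t = ∫ σ in Iio t, g σ := by
  rw [conv_eq_integral_mul_sub, ← integral_indicator measurableSet_Iio]
  congr 1 with σ
  by_cases hσ : σ < t <;> simp [heaviside, hσ]

lemma nonneg_of_monotone_integral_Iio {g : ℝ → ℝ} {t₀ : ℝ}
    (hg_int : ∀ t, IntegrableOn g (Iio t)) (hF : Monotone fun t => ∫ σ in Iio t, g σ)
    (hg_meas : StronglyMeasurableAtFilter g (𝓝[>] t₀))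
    (hg_cont : ContinuousWithinAt g (Ioi t₀) t₀) : 0 ≤ g t₀ := by
  have hG : Monotone fun t => ∫ σ in t₀..t, g σ := by
    intro s t hst
    simp only [← intervalIntegral.integral_Iio_sub_Iio' (hg_int _) (hg_int t₀)]
    exact sub_le_sub_right (hF hst) _
  rw [← intervalIntegral.derivWithin_integral_right IntervalIntegrable.refl hg_meas hg_cont]
  exact (hG.monotoneOn _).derivWithin_nonneg

/-- A causal impulse response (continuous on `[0,∞)`, vanishing on `(−∞,0)`) is
nonnegative on `[0,∞)` if and only if the system maps every nonnegative bounded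
measurable nondecreasing input vanishing on `(−∞,0]` to a nonnegative
nondecreasing output. -/
theorem external_positivity_iff_monotone_to_monotone
    (g : ℝ → ℝ) (hg_cont : ContinuousOn g (Set.Ici 0))
    (hg_causal : ∀ t < (0 : ℝ), g t = 0) :
    (∀ t ≥ (0 : ℝ), 0 ≤ g t) ↔
      (∀ u : ℝ → ℝ, Measurable u → (∃ C : ℝ, ∀ t, |u t| ≤ C) → Monotone u →
        (∀ t, 0 ≤ u t) → (∀ t ≤ (0 : ℝ), u t = 0) →
        (∀ t : ℝ, 0 ≤ conv g u t) ∧ Monotone (conv g u)) := by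
  have hg_int := integrableOn_Iio_of_continuousOn_Ici hg_cont hg_causal
  constructor
  · intro hg_pos u hu ⟨C, hC⟩ hu_mono hu_nonneg hu_zero
    have hg : ∀ s, 0 ≤ g s := fun s =>
      (le_or_gt 0 s).elim (hg_pos s) fun hs => (hg_causal s hs).ge
    exact ⟨conv_nonneg hg hu_nonneg, monotone_conv hg hg_int hu hC hu_mono hu_zero⟩
  · intro H t₀ ht₀
    have h_step := (H heaviside measurable_heaviside ⟨1, abs_heaviside_le_one⟩
      monotone_heaviside heaviside_nonneg fun _ => heaviside_of_nonpos).2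
    have hF : Monotone fun t => ∫ σ in Iio t, g σ := by
      simpa only [Monotone, conv_heaviside] using h_step
    exact nonneg_of_monotone_integral_Iio hg_int hF
      ((hg_cont.mono (Ioi_subset_Ici ht₀)).stronglyMeasurableAtFilter_nhdsWithin
        measurableSet_Ioi t₀)
      ((hg_cont t₀ ht₀).mono (Ioi_subset_Ici ht₀))
end

section
/- Let λ₁, …, λ_n ∈ ℂ be distinct and β₁, …, β_n ∈ ℂ be nonzero, such that the family of pairs (λ_i, β_i) is closed under complex conjugation, so that g(t) = Σ_{i=1}^n β_i e^{λ_i t} is real-valued for all t ∈ ℝ. If g(t) ≥ 0 for all t ≥ 0, then there exists an index i such that λ_i is real and Re λ_j ≤ λ_i for all j = 1, …, n. -/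
/-!
For `Re z` larger than every `Re λᵢ`, the rational function `F(z) = Σ βᵢ / (z - λᵢ)` is the
Laplace transform `∫₀^∞ g(t) e^{-zt} dt`, so `g ≥ 0` gives `‖F z‖ ≤ F (Re z)`. Let `λⱼ` have
maximal real part `α`. If no pole of real part `α` is real, `F` stays bounded on the real
half-line `[α, ∞)`, whereas `‖F (λⱼ + ε)‖ ≥ ‖βⱼ‖ / ε - O(1)` blows up as `ε → 0⁺`.
-/

open Complex MeasureTheory Set
open scoped ComplexOrder

theorem norm_setIntegral_Ioi_mul_exp_neg_le {g : ℝ → ℂ} (hg : ∀ t, 0 < t → 0 ≤ g t) (z : ℂ) :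
    ‖∫ t in Ioi (0 : ℝ), g t * exp (-(z * t))‖ ≤
      ‖∫ t in Ioi (0 : ℝ), g t * exp (-((z.re : ℂ) * t))‖ := by
  have hpt : ∀ t ∈ Ioi (0 : ℝ),
      g t * exp (-((z.re : ℂ) * t)) = (‖g t * exp (-(z * t))‖ : ℂ) := fun t ht => by
    have h : ((‖g t‖ : ℝ) : ℂ) = g t := RCLike.norm_of_nonneg' (hg t ht)
    rw [norm_mul, norm_exp, ofReal_mul, h, ofReal_exp]
    congr 2
    simp
  rw [setIntegral_congr_fun measurableSet_Ioi hpt, integral_complex_ofReal, norm_real,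
    Real.norm_of_nonneg (integral_nonneg fun _ => norm_nonneg _)]
  exact norm_integral_le_integral_norm _

lemma exists_pos_le_norm_ofReal_sub {w : ℂ} {α : ℝ} (hw : w.im = 0 → w.re < α) :
    ∃ c > 0, ∀ x : ℝ, α ≤ x → c ≤ ‖(x : ℂ) - w‖ := by
  by_cases him : w.im = 0
  · refine ⟨α - w.re, sub_pos.mpr (hw him), fun x hx => ?_⟩
    calc α - w.re ≤ ((x : ℂ) - w).re := by simpa using hx
      _ ≤ ‖(x : ℂ) - w‖ := re_le_norm _
  · refine ⟨|w.im|, abs_pos.mpr him, fun x _ => ?_⟩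
    calc |w.im| = |((x : ℂ) - w).im| := by simp
      _ ≤ ‖(x : ℂ) - w‖ := abs_im_le_norm _

lemma norm_le_norm_add_ofReal {v : ℂ} (hv : 0 ≤ v.re) {e : ℝ} (he : 0 ≤ e) :
    ‖v‖ ≤ ‖v + e‖ := by
  rw [norm_def, norm_def]
  gcongr
  simp only [normSq_apply, add_re, add_im, ofReal_re, ofReal_im, add_zero]
  nlinarith

section ExpSum

variable {ι : Type*} [Fintype ι] (lam β : ι → ℂ)

lemma integral_Ioi_sum_mul_exp_mul_exp_neg {z : ℂ} (hz : ∀ i, (lam i).re < z.re) :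
    ∫ t in Ioi (0 : ℝ), (∑ i, β i * exp (lam i * t)) * exp (-(z * t)) =
      ∑ i, β i / (z - lam i) := by
  have hre : ∀ i, (lam i - z).re < 0 := fun i => by simpa using hz i
  have hsplit : ∀ t : ℝ, (∑ i, β i * exp (lam i * t)) * exp (-(z * t)) =
      ∑ i, β i * exp ((lam i - z) * t) := fun t => by
    rw [Finset.sum_mul]
    refine Finset.sum_congr rfl fun i _ => ?_
    rw [mul_assoc, ← exp_add]
    ring_nf
  simp_rw [hsplit]
  rw [integral_finsetSum _ fun i _ => (integrableOn_exp_mul_complex_Ioi (hre i) 0).const_mul _]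
  refine Finset.sum_congr rfl fun i _ => ?_
  rw [integral_const_mul, integral_exp_mul_complex_Ioi (hre i) 0]
  simp only [ofReal_zero, mul_zero, exp_zero, neg_div, ← neg_sub z, div_neg, neg_neg,
    mul_one_div]

lemma norm_sum_div_sub_le_norm_sum_div_ofReal_re_sub
    (hg : ∀ t : ℝ, 0 < t → 0 ≤ ∑ i, β i * exp (lam i * t)) {z : ℂ}
    (hz : ∀ i, (lam i).re < z.re) :
    ‖∑ i, β i / (z - lam i)‖ ≤ ‖∑ i, β i / ((z.re : ℂ) - lam i)‖ := by
  have hz' : ∀ i, (lam i).re < (z.re : ℂ).re := by simpa using hz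
  rw [← integral_Ioi_sum_mul_exp_mul_exp_neg lam β hz,
    ← integral_Ioi_sum_mul_exp_mul_exp_neg lam β hz']
  exact norm_setIntegral_Ioi_mul_exp_neg_le hg z

lemma exists_bound_norm_sum_div_ofReal_sub {α : ℝ}
    (hlam : ∀ i, (lam i).im = 0 → (lam i).re < α) :
    ∃ C, ∀ x : ℝ, α ≤ x → ‖∑ i, β i / ((x : ℂ) - lam i)‖ ≤ C := by
  choose c hc_pos hc using fun i => exists_pos_le_norm_ofReal_sub (hlam i)
  refine ⟨∑ i, ‖β i‖ / c i,
    fun x hx => (norm_sum_le _ _).trans (Finset.sum_le_sum fun i _ => ?_)⟩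
  rw [norm_div]
  exact div_le_div_of_nonneg_left (norm_nonneg _) (hc_pos i) (hc i x hx)

lemma exists_sub_le_norm_sum_div_add_sub (hlam : Function.Injective lam) {j : ι}
    (hj : ∀ i, (lam i).re ≤ (lam j).re) :
    ∃ D, ∀ ε : ℝ, 0 < ε → ‖β j‖ / ε - D ≤ ‖∑ i, β i / (lam j + ε - lam i)‖ := by
  classical
  refine ⟨∑ i ∈ Finset.univ.erase j, ‖β i‖ / ‖lam j - lam i‖, fun ε hε => ?_⟩
  -- Moving `z` from `λⱼ` to the right only moves it away from every other pole.
  have hrest : ‖∑ i ∈ Finset.univ.erase j, β i / (lam j + ε - lam i)‖ ≤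
      ∑ i ∈ Finset.univ.erase j, ‖β i‖ / ‖lam j - lam i‖ := by
    refine (norm_sum_le _ _).trans (Finset.sum_le_sum fun i hi => ?_)
    have hne : lam j - lam i ≠ 0 :=
      sub_ne_zero.mpr fun h => Finset.ne_of_mem_erase hi (hlam h).symm
    rw [norm_div, add_sub_right_comm]
    refine div_le_div_of_nonneg_left (norm_nonneg _) (norm_pos_iff.mpr hne) ?_
    exact norm_le_norm_add_ofReal (by simpa using hj i) hε.le
  have hfirst : β j / (lam j + ε - lam j) = β j / ε := by ring_nf
  have hfirst_norm : ‖β j / (ε : ℂ)‖ = ‖β j‖ / ε := by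
    rw [norm_div, norm_real, Real.norm_of_nonneg hε.le]
  rw [← Finset.add_sum_erase _ _ (Finset.mem_univ j), hfirst]
  linarith [norm_le_add_norm_add (β j / ε)
    (∑ i ∈ Finset.univ.erase j, β i / (lam j + ε - lam i))]

end ExpSum

theorem dominant_real_pole_general {n : ℕ} (hn : 0 < n) (lam β : Fin n → ℂ)
    (h_distinct : Function.Injective lam)
    (h_nonzero : ∀ i, β i ≠ 0)
    (h_real : ∀ t : ℝ, (∑ i, β i * Complex.exp (lam i * t)).im = 0)
    (h_pos : ∀ t : ℝ, 0 ≤ t → 0 ≤ (∑ i, β i * Complex.exp (lam i * t)).re) :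
    ∃ i, (lam i).im = 0 ∧ ∀ j, (lam j).re ≤ (lam i).re := by
  have : Nonempty (Fin n) := ⟨⟨0, hn⟩⟩
  obtain ⟨j, hj⟩ := Finite.exists_max fun i => (lam i).re
  by_contra! hcon
  obtain ⟨C, hC⟩ := exists_bound_norm_sum_div_ofReal_sub lam β (α := (lam j).re)
    fun i hi => (hcon i hi).elim fun k hk => hk.trans_le (hj k)
  obtain ⟨D, hD⟩ := exists_sub_le_norm_sum_div_add_sub lam β h_distinct hj
  have hg : ∀ t : ℝ, 0 < t → 0 ≤ ∑ i, β i * exp (lam i * t) := fun t ht =>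
    Complex.nonneg_iff.mpr ⟨h_pos t ht.le, (h_real t).symm⟩
  have hβ : 0 < ‖β j‖ := norm_pos_iff.mpr (h_nonzero j)
  set ε := ‖β j‖ / (|C + D| + 1) with hε_def
  have hε : 0 < ε := by positivity
  have hz : ∀ i, (lam i).re < (lam j + ε).re := fun i => by
    simpa using (hj i).trans_lt (lt_add_of_pos_right _ hε)
  have hblowup : ‖β j‖ / ε = |C + D| + 1 := by
    rw [hε_def]
    field_simp
  have hbounded : ‖β j‖ / ε - D ≤ C :=
    calc ‖β j‖ / ε - D
        ≤ ‖∑ i, β i / (lam j + ε - lam i)‖ := hD ε hε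
      _ ≤ ‖∑ i, β i / (((lam j + ε).re : ℂ) - lam i)‖ :=
        norm_sum_div_sub_le_norm_sum_div_ofReal_re_sub lam β hg hz
      _ ≤ C := hC _ (by simpa using hε.le)
  linarith [le_abs_self (C + D)]

/-- Dominant real pole of externally positive systems: if a real-valued
exponential sum `g(t) = Σ βᵢ e^{λᵢ t}` (with distinct exponents, nonzero
coefficients, and the family of pairs `(λᵢ, βᵢ)` closed under conjugation) is
nonnegative on `[0,∞)`, then the pole of maximal real part is real. -/
theorem dominant_real_pole {n : ℕ} (hn : 0 < n) (lam β : Fin n → ℂ)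
    (h_distinct : Function.Injective lam)
    (h_nonzero : ∀ i, β i ≠ 0)
    (h_conj : ∀ i, ∃ j, lam j = starRingEnd ℂ (lam i) ∧ β j = starRingEnd ℂ (β i))
    (h_real : ∀ t : ℝ, (∑ i, β i * Complex.exp (lam i * t)).im = 0)
    (h_pos : ∀ t : ℝ, 0 ≤ t → 0 ≤ (∑ i, β i * Complex.exp (lam i * t)).re) :
    ∃ i, (lam i).im = 0 ∧ ∀ j, (lam j).re ≤ (lam i).re :=
  dominant_real_pole_general hn lam β h_distinct h_nonzero h_real h_pos
end

section
/- Let A ∈ ℝ^{n×n}, b ∈ ℝ^n, c ∈ ℝ^{1×n}. Suppose there exist a symmetric matrix Q ∈ ℝ^{n×n} and γ ∈ ℝ such that: (i) AᵀQ + QA + 2γQ is negative semidefinite; (ii) bᵀQb ≤ 0; (iii) Q + cᵀc is positive definite; (iv) c·b ≥ 0; and (v) Q has exactly n−1 positive eigenvalues and exactly one negative eigenvalue (counted with multiplicity). Then c e^{At} b ≥ 0 for all t ≥ 0. -/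
/-!
Along `x(t) = e^{At} b` the quadratic form `V = xᵀ Q x` satisfies `V' ≤ -2γ V` by (i), so
`e^{2γt} V(x(t))` is antitone and (ii) keeps `V(x(t)) ≤ 0` for `t ≥ 0`. For `b ≠ 0` the state
`x(t)` never vanishes, and then (iii) forbids `c x(t) = 0`: otherwise
`xᵀ (Q + cᵀc) x = V(x) ≤ 0`. Thus the continuous output `c x(t)` has no zero on `[0, ∞)`; being
nonnegative, hence positive, at `t = 0` by (iv), it stays positive.
-/

open Matrix

variable {ι : Type*} [Fintype ι]

theorem hasDerivAt_exp_smul_mulVec [DecidableEq ι] (A : Matrix ι ι ℝ) (v : ι → ℝ) (t : ℝ) :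
    HasDerivAt (fun s : ℝ => NormedSpace.exp (s • A) *ᵥ v)
      (A *ᵥ (NormedSpace.exp (t • A) *ᵥ v)) t := by
  open scoped Matrix.Norms.Operator in
  have h := ((mulVecBilin ℝ ℝ).flip v).toContinuousLinearMap.hasFDerivAt.comp_hasDerivAt t
    (hasDerivAt_exp_smul_const' (𝕂 := ℝ) A t)
  rw [mulVec_mulVec]
  exact h

theorem hasDerivAt_dotProduct_mulVec {x : ℝ → ι → ℝ} {x' : ι → ℝ} {t : ℝ}
    (hx : HasDerivAt x x' t) (Q : Matrix ι ι ℝ) :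
    HasDerivAt (fun s => x s ⬝ᵥ Q *ᵥ x s) (x' ⬝ᵥ Q *ᵥ x t + x t ⬝ᵥ Q *ᵥ x') t := by
  have hQx : HasDerivAt (fun s => Q *ᵥ x s) (Q *ᵥ x') t :=
    Q.mulVecLin.toContinuousLinearMap.hasFDerivAt.comp_hasDerivAt t hx
  have h := HasDerivAt.fun_sum (u := Finset.univ) fun i _ =>
    (hasDerivAt_pi.1 hx i).fun_mul (hasDerivAt_pi.1 hQx i)
  simpa only [dotProduct, Finset.sum_add_distrib] using h

theorem dotProduct_transpose_mul_add_mul_mulVec (A Q : Matrix ι ι ℝ) (x : ι → ℝ) :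
    x ⬝ᵥ (Aᵀ * Q + Q * A) *ᵥ x = (A *ᵥ x) ⬝ᵥ Q *ᵥ x + x ⬝ᵥ Q *ᵥ (A *ᵥ x) := by
  rw [add_mulVec, dotProduct_add, ← mulVec_mulVec, ← mulVec_mulVec, dotProduct_mulVec x Aᵀ,
    vecMul_transpose]

theorem antitone_exp_mul_dotProduct_mulVec {A Q : Matrix ι ι ℝ} {γ : ℝ}
    (hlyap : (-(Aᵀ * Q + Q * A + (2 * γ) • Q)).PosSemidef) {x : ℝ → ι → ℝ}
    (hx : ∀ s, HasDerivAt x (A *ᵥ x s) s) :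
    Antitone fun s => Real.exp (2 * γ * s) * (x s ⬝ᵥ Q *ᵥ x s) := by
  refine antitone_of_hasDerivAt_nonpos
    (f' := fun s => Real.exp (2 * γ * s) * (2 * γ) * (x s ⬝ᵥ Q *ᵥ x s) +
      Real.exp (2 * γ * s) * ((A *ᵥ x s) ⬝ᵥ Q *ᵥ x s + x s ⬝ᵥ Q *ᵥ (A *ᵥ x s)))
    (fun s => ?_) fun s => ?_
  · simpa using ((hasDerivAt_id s).const_mul (2 * γ)).exp.fun_mul
      (hasDerivAt_dotProduct_mulVec (hx s) Q)
  · have h := hlyap.dotProduct_mulVec_nonneg (x s)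
    rw [star_trivial, neg_mulVec, dotProduct_neg, add_mulVec, dotProduct_add, smul_mulVec,
      dotProduct_smul, dotProduct_transpose_mul_add_mul_mulVec, smul_eq_mul] at h
    have := Real.exp_pos (2 * γ * s)
    simp only [Pi.zero_apply]
    nlinarith

theorem dotProduct_mulVec_nonpos_of_lyapunov {A Q : Matrix ι ι ℝ} {γ : ℝ}
    (hlyap : (-(Aᵀ * Q + Q * A + (2 * γ) • Q)).PosSemidef) {x : ℝ → ι → ℝ}
    (hx : ∀ s, HasDerivAt x (A *ᵥ x s) s) (hx0 : x 0 ⬝ᵥ Q *ᵥ x 0 ≤ 0) {s : ℝ} (hs : 0 ≤ s) :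
    x s ⬝ᵥ Q *ᵥ x s ≤ 0 := by
  have h := antitone_exp_mul_dotProduct_mulVec hlyap hx hs
  simp only [mul_zero, Real.exp_zero, one_mul] at h
  exact nonpos_of_mul_nonpos_right (h.trans hx0) (Real.exp_pos _)

theorem mulVec_ne_zero_of_posDef_add_transpose_mul {m : Type*} [Fintype m] {Q : Matrix ι ι ℝ}
    {C : Matrix m ι ℝ} (hQC : (Q + Cᵀ * C).PosDef) {x : ι → ℝ} (hx : x ≠ 0)
    (hQx : x ⬝ᵥ Q *ᵥ x ≤ 0) : C *ᵥ x ≠ 0 := by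
  intro hCx
  have h := hQC.dotProduct_mulVec_pos hx
  rw [star_trivial, add_mulVec, dotProduct_add, ← mulVec_mulVec, hCx, mulVec_zero,
    dotProduct_zero, add_zero] at h
  exact hQx.not_gt h

theorem IsPreconnected.pos_of_ne_zero {α : Type*} [TopologicalSpace α] {S : Set α}
    (hS : IsPreconnected S) {f : α → ℝ} (hf : ContinuousOn f S) (hf0 : ∀ x ∈ S, f x ≠ 0)
    {a b : α} (ha : a ∈ S) (hb : b ∈ S) (hfa : 0 < f a) : 0 < f b := by
  by_contra! hfb
  obtain ⟨c, hc, hfc⟩ := hS.intermediate_value hb ha hf ⟨hfb, hfa.le⟩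
  exact hf0 c hc hfc

theorem sufficient_test_external_positivity_general {n : ℕ}
    (A : Matrix (Fin n) (Fin n) ℝ) (b : Matrix (Fin n) (Fin 1) ℝ)
    (c : Matrix (Fin 1) (Fin n) ℝ)
    (Q : Matrix (Fin n) (Fin n) ℝ) (γ : ℝ)
    (h1 : (-(Aᵀ * Q + Q * A + (2 * γ) • Q)).PosSemidef)
    (h2 : (bᵀ * Q * b) 0 0 ≤ 0)
    (h3 : (Q + cᵀ * c).PosDef)
    (h4 : 0 ≤ (c * b) 0 0) :
    ∀ t : ℝ, 0 ≤ t → 0 ≤ (c * NormedSpace.exp (t • A) * b) 0 0 := by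
  intro t ht
  let v : Fin n → ℝ := fun i => b i 0
  let x : ℝ → Fin n → ℝ := fun s => NormedSpace.exp (s • A) *ᵥ v
  have hx : ∀ s, HasDerivAt x (A *ᵥ x s) s := hasDerivAt_exp_smul_mulVec A v
  have hx0 : x 0 = v := by simp [x]
  rw [show (c * NormedSpace.exp (t • A) * b) 0 0 = (c *ᵥ x t) 0 by rw [Matrix.mul_assoc]; rfl]
  rcases eq_or_ne v 0 with hv | hv
  · simp [x, hv]
  have hxQx : ∀ s, 0 ≤ s → x s ⬝ᵥ Q *ᵥ x s ≤ 0 := fun s hs =>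
    dotProduct_mulVec_nonpos_of_lyapunov h1 hx (by rw [hx0]; rwa [Matrix.mul_assoc] at h2) hs
  have hxne : ∀ s, x s ≠ 0 := fun s => by
    simpa only [x, mulVec_zero] using (mulVec_injective_iff_isUnit.2 (isUnit_exp (s • A))).ne hv
  have hy : ∀ s ∈ Set.Ici (0 : ℝ), (c *ᵥ x s) 0 ≠ 0 := fun s hs hys =>
    mulVec_ne_zero_of_posDef_add_transpose_mul h3 (hxne s) (hxQx s hs)
      (funext (Fin.forall_fin_one.2 hys))
  have hxc : Continuous x := continuous_iff_continuousAt.2 fun s => (hx s).continuousAt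
  have hyc : Continuous fun s => (c *ᵥ x s) 0 := by fun_prop
  have hy0 : 0 < (c *ᵥ x 0) 0 := by
    rw [hx0]
    exact h4.lt_of_ne (hx0 ▸ hy 0 Set.self_mem_Ici).symm
  exact (isPreconnected_Ici.pos_of_ne_zero hyc.continuousOn hy Set.self_mem_Ici ht hy0).le

/-- Sufficient LMI-type test for external positivity: under conditions (i)–(v)
on a symmetric matrix `Q` with exactly `n−1` positive and one negative
eigenvalue, the impulse response `c e^{At} b` is nonnegative on `[0,∞)`. -/
theorem sufficient_test_external_positivity {n : ℕ}
    (A : Matrix (Fin n) (Fin n) ℝ) (b : Matrix (Fin n) (Fin 1) ℝ)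
    (c : Matrix (Fin 1) (Fin n) ℝ)
    (Q : Matrix (Fin n) (Fin n) ℝ) (γ : ℝ)
    (hQ : Q.IsHermitian)
    (h1 : (-(Aᵀ * Q + Q * A + (2 * γ) • Q)).PosSemidef)
    (h2 : (bᵀ * Q * b) 0 0 ≤ 0)
    (h3 : (Q + cᵀ * c).PosDef)
    (h4 : 0 ≤ (c * b) 0 0)
    (h5 : (Finset.univ.filter fun i => 0 < hQ.eigenvalues i).card = n - 1 ∧
          (Finset.univ.filter fun i => hQ.eigenvalues i < 0).card = 1) :
    ∀ t : ℝ, 0 ≤ t → 0 ≤ (c * NormedSpace.exp (t • A) * b) 0 0 :=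
  sufficient_test_external_positivity_general A b c Q γ h1 h2 h3 h4
end

section
/- Let β₁, β₂ ∈ ℝ and λ₁, λ₂ > 0, and define g(t) = β₁ e^{−λ₁ t} + β₂ e^{−λ₂ t}. Then g'(t)² − g(t)·g''(t) ≥ 0 for all t ≥ 0 if and only if g'(0)² − g(0)·g''(0) ≥ 0. -/
/-! For `g = a + b` with `a' = c₁ a` and `b' = c₂ b`, expanding gives
`g'² - g g'' = -(c₁ - c₂)² a b`. For `a = β₁ e^{c₁ t}`, `b = β₂ e^{c₂ t}` this is
`-β₁ β₂ (c₁ - c₂)² e^{(c₁ + c₂) t}`, whose sign does not depend on `t`. -/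

open Real

lemma hasDerivAt_const_mul_exp_mul (β c t : ℝ) :
    HasDerivAt (fun t => β * exp (c * t)) (β * c * exp (c * t)) t :=
  (((hasDerivAt_id' t).const_mul c).exp.const_mul β).congr_deriv (by ring)

section TwoExponentials

variable (β₁ β₂ c₁ c₂ : ℝ)

lemma deriv_add_const_mul_exp_mul :
    deriv (fun t => β₁ * exp (c₁ * t) + β₂ * exp (c₂ * t)) =
      fun t => β₁ * c₁ * exp (c₁ * t) + β₂ * c₂ * exp (c₂ * t) :=
  funext fun t =>
    ((hasDerivAt_const_mul_exp_mul β₁ c₁ t).add (hasDerivAt_const_mul_exp_mul β₂ c₂ t)).deriv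

lemma sq_deriv_sub_mul_deriv_deriv_add_const_mul_exp_mul (t : ℝ) :
    let g : ℝ → ℝ := fun t => β₁ * exp (c₁ * t) + β₂ * exp (c₂ * t)
    deriv g t ^ 2 - g t * deriv (deriv g) t =
      -(β₁ * β₂ * (c₁ - c₂) ^ 2) * exp ((c₁ + c₂) * t) := by
  intro g
  simp only [g, deriv_add_const_mul_exp_mul, add_mul, exp_add]
  ring

end TwoExponentials

theorem second_order_test_general (β₁ β₂ l₁ l₂ : ℝ) :
    let g : ℝ → ℝ := fun t => β₁ * Real.exp (-l₁ * t) + β₂ * Real.exp (-l₂ * t)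
    (∀ t : ℝ, 0 ≤ t → 0 ≤ deriv g t ^ 2 - g t * deriv (deriv g) t) ↔
      0 ≤ deriv g 0 ^ 2 - g 0 * deriv (deriv g) 0 := by
  intro g
  simp only [g, sq_deriv_sub_mul_deriv_deriv_add_const_mul_exp_mul,
    mul_nonneg_iff_of_pos_right (exp_pos _)]
  exact ⟨fun h => h 0 le_rfl, fun h _ _ => h⟩

/-- Test for second-order systems: for `g(t) = β₁ e^{−l₁ t} + β₂ e^{−l₂ t}`
with `l₁, l₂ > 0`, the log-concavity test `g'(t)² − g(t)·g''(t) ≥ 0` holds for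
all `t ≥ 0` if and only if it holds at `t = 0`. -/
theorem second_order_test (β₁ β₂ l₁ l₂ : ℝ) (hl₁ : 0 < l₁) (hl₂ : 0 < l₂) :
    let g : ℝ → ℝ := fun t => β₁ * Real.exp (-l₁ * t) + β₂ * Real.exp (-l₂ * t)
    (∀ t : ℝ, 0 ≤ t → 0 ≤ deriv g t ^ 2 - g t * deriv (deriv g) t) ↔
      0 ≤ deriv g 0 ^ 2 - g 0 * deriv (deriv g) 0 :=
  second_order_test_general β₁ β₂ l₁ l₂
end

section
/- Let n ≥ 2, let b₁, …, b_n > 0 and α₁, …, α_n > 0 with α_i ≠ α_{i+1} for all i = 1, …, n−1, and define g(t) = Σ_{i=1}^n b_i e^{−α_i t}. Then g'(t)² − g(t)·g''(t) < 0 for all t ≥ 0. Consequently, g is nonnegative but not log-concave on [0,∞), so the parallel interconnection of strongly unimodal first-order LTI systems need not be strongly unimodal. -/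
/-!
With `xᵢ = bᵢ e^{-αᵢ t} > 0` one has `g' = -Σ αᵢ xᵢ` and `g'' = Σ αᵢ² xᵢ`, so by Lagrange's identity
`g'² - g g'' = -½ Σᵢⱼ xᵢ xⱼ (αᵢ - αⱼ)²`, which is negative as soon as two rates differ.
Hence `(log g)'' = (g g'' - g'²) / g² > 0`: `log g` is strictly convex, while log-concavity of
the positive function `g` would make `log g` concave.
-/

def LogConcaveOn (S : Set ℝ) (f : ℝ → ℝ) : Prop :=
  (∀ x ∈ S, 0 ≤ f x) ∧
    ∀ x ∈ S, ∀ y ∈ S, ∀ l : ℝ, 0 ≤ l → l ≤ 1 →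
      f x ^ l * f y ^ (1 - l) ≤ f (l * x + (1 - l) * y)

open Finset Real

theorem sq_sum_mul_lt_sum_mul_sum_sq {ι : Type*} [Fintype ι] {a x : ι → ℝ} (hx : ∀ i, 0 < x i)
    {i j : ι} (hij : a i ≠ a j) :
    (∑ k, a k * x k) ^ 2 < (∑ k, x k) * ∑ k, a k ^ 2 * x k := by
  have lagrange : ∑ k, ∑ l, x k * x l * (a k - a l) ^ 2
      = 2 * ((∑ k, x k) * (∑ k, a k ^ 2 * x k) - (∑ k, a k * x k) ^ 2) := by
    have expand : ∀ k l, x k * x l * (a k - a l) ^ 2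
        = x l * (a k ^ 2 * x k) + x k * (a l ^ 2 * x l) - 2 * (a k * x k * (a l * x l)) :=
      fun k l => by ring
    simp only [expand, sum_add_distrib, sum_sub_distrib, ← mul_sum, ← sum_mul]
    ring
  have hterm : ∀ k l, 0 ≤ x k * x l * (a k - a l) ^ 2 := fun k l => by
    have := hx k; have := hx l; positivity
  have hpos : 0 < ∑ k, ∑ l, x k * x l * (a k - a l) ^ 2 := by
    refine sum_pos' (fun k _ => sum_nonneg fun l _ => hterm k l) ⟨i, mem_univ _, ?_⟩
    refine sum_pos' (fun l _ => hterm i l) ⟨j, mem_univ _, ?_⟩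
    have := hx i; have := hx j; have := sub_ne_zero.mpr hij
    positivity
  linarith

theorem StrictConvexOn.not_concaveOn {E : Type*} [AddCommGroup E] [Module ℝ E] {s : Set E}
    {f : E → ℝ} (hf : StrictConvexOn ℝ s f) {x y : E} (hx : x ∈ s) (hy : y ∈ s) (hxy : x ≠ y) :
    ¬ ConcaveOn ℝ s f := fun hc =>
  (hf.2 hx hy hxy one_half_pos one_half_pos (add_halves 1)).not_ge
    (hc.2 hx hy one_half_pos.le one_half_pos.le (add_halves 1))

theorem LogConcaveOn.concaveOn_log {S : Set ℝ} {f : ℝ → ℝ} (hf : LogConcaveOn S f)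
    (hS : Convex ℝ S) (hpos : ∀ x ∈ S, 0 < f x) : ConcaveOn ℝ S (fun x => log (f x)) := by
  refine ⟨hS, fun x hx y hy l m hl _ hlm => ?_⟩
  obtain rfl : m = 1 - l := by linarith
  have hxl := rpow_pos_of_pos (hpos x hx) l
  have hym := rpow_pos_of_pos (hpos y hy) (1 - l)
  have := log_le_log (mul_pos hxl hym) (hf.2 x hx y hy l hl (by linarith))
  rwa [log_mul hxl.ne' hym.ne', log_rpow (hpos x hx), log_rpow (hpos y hy)] at this

theorem strictConvexOn_log_of_sq_deriv_lt {D : Set ℝ} (hD : Convex ℝ D) {f f' f'' : ℝ → ℝ}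
    (hf : ∀ t, HasDerivAt f (f' t) t) (hf' : ∀ t, HasDerivAt f' (f'' t) t)
    (hpos : ∀ t, 0 < f t) (h : ∀ t ∈ D, f' t ^ 2 < f t * f'' t) :
    StrictConvexOn ℝ D (fun t => log (f t)) := by
  have hlog : deriv (fun t => log (f t)) = fun t => f' t / f t :=
    funext fun t => ((hf t).log (hpos t).ne').deriv
  refine strictConvexOn_of_deriv2_pos' hD
    (fun t _ => ((hf t).continuousAt.log (hpos t).ne').continuousWithinAt) fun t ht => ?_
  rw [Function.iterate_succ_apply, Function.iterate_one, hlog,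
    ((hf' t).fun_div (hf t) (hpos t).ne').deriv]
  have := hpos t
  have := h t ht
  apply div_pos <;> nlinarith

noncomputable def expSum {ι : Type*} [Fintype ι] (b a : ι → ℝ) (t : ℝ) : ℝ :=
  ∑ i, b i * exp (-a i * t)

section expSum

variable {ι : Type*} [Fintype ι]

theorem hasDerivAt_expSum (b a : ι → ℝ) (t : ℝ) :
    HasDerivAt (expSum b a) (expSum (fun i => -a i * b i) a t) t :=
  HasDerivAt.fun_sum fun i _ =>
    ((((hasDerivAt_id' t).const_mul (-a i)).exp).const_mul (b i)).congr_deriv (by ring)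

theorem deriv_expSum (b a : ι → ℝ) : deriv (expSum b a) = expSum (fun i => -a i * b i) a :=
  funext fun t => (hasDerivAt_expSum b a t).deriv

theorem expSum_pos [Nonempty ι] {b : ι → ℝ} (hb : ∀ i, 0 < b i) (a : ι → ℝ) (t : ℝ) :
    0 < expSum b a t :=
  sum_pos (fun i _ => mul_pos (hb i) (exp_pos _)) univ_nonempty

theorem sq_deriv_expSum_lt {b a : ι → ℝ} (hb : ∀ i, 0 < b i) {i j : ι} (hij : a i ≠ a j)
    (t : ℝ) :
    expSum (fun i => -a i * b i) a t ^ 2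
      < expSum b a t * expSum (fun i => -a i * (-a i * b i)) a t := by
  have h1 : expSum (fun i => -a i * b i) a t = -∑ k, a k * (b k * exp (-a k * t)) := by
    rw [expSum, ← sum_neg_distrib]
    exact sum_congr rfl fun k _ => by ring
  have h2 : expSum (fun i => -a i * (-a i * b i)) a t = ∑ k, a k ^ 2 * (b k * exp (-a k * t)) :=
    sum_congr rfl fun k _ => by ring
  rw [h1, h2, neg_sq]
  exact sq_sum_mul_lt_sum_mul_sum_sq (fun k => mul_pos (hb k) (exp_pos _)) hij

end expSum

theorem parallel_not_strongly_unimodal_general {n : ℕ} (hn : 2 ≤ n) (b a : Fin n → ℝ)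
    (hb : ∀ i, 0 < b i)
    (ha_ne : ∀ i j : Fin n, (j : ℕ) = (i : ℕ) + 1 → a i ≠ a j) :
    let g : ℝ → ℝ := fun t => ∑ i, b i * Real.exp (-a i * t)
    (∀ t : ℝ, 0 ≤ t → deriv g t ^ 2 - g t * deriv (deriv g) t < 0) ∧
      (∀ t : ℝ, 0 ≤ t → 0 ≤ g t) ∧ ¬ LogConcaveOn (Set.Ici 0) g := by
  intro g
  rw [show g = expSum b a from rfl]
  have : Nonempty (Fin n) := ⟨⟨0, by omega⟩⟩
  have hpos := expSum_pos hb a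
  have hkey := sq_deriv_expSum_lt hb (ha_ne ⟨0, by omega⟩ ⟨1, by omega⟩ rfl)
  refine ⟨fun t _ => ?_, fun t _ => (hpos t).le, fun hlc => ?_⟩
  · rw [deriv_expSum, deriv_expSum]
    exact sub_neg.mpr (hkey t)
  · exact (strictConvexOn_log_of_sq_deriv_lt (convex_Ici 0) (hasDerivAt_expSum b a)
      (hasDerivAt_expSum _ a) hpos fun t _ => hkey t).not_concaveOn
      Set.self_mem_Ici (zero_le_one' ℝ) zero_ne_one
      (hlc.concaveOn_log (convex_Ici 0) fun t _ => hpos t)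

/-- Parallel interconnections of strongly unimodal first-order systems are not
strongly unimodal: for `g(t) = Σᵢ bᵢ e^{−αᵢ t}` with positive coefficients and
rates, consecutive rates distinct, the test `g'² − g·g''` is strictly negative
on `[0,∞)`; hence `g` is nonnegative but not log-concave on `[0,∞)`. -/
theorem parallel_not_strongly_unimodal {n : ℕ} (hn : 2 ≤ n) (b a : Fin n → ℝ)
    (hb : ∀ i, 0 < b i) (ha : ∀ i, 0 < a i)
    (ha_ne : ∀ i j : Fin n, (j : ℕ) = (i : ℕ) + 1 → a i ≠ a j) :
    let g : ℝ → ℝ := fun t => ∑ i, b i * Real.exp (-a i * t)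
    (∀ t : ℝ, 0 ≤ t → deriv g t ^ 2 - g t * deriv (deriv g) t < 0) ∧
      (∀ t : ℝ, 0 ≤ t → 0 ≤ g t) ∧ ¬ LogConcaveOn (Set.Ici 0) g :=
  parallel_not_strongly_unimodal_general hn b a hb ha_ne
end

section
/- Let n ≥ 1, let b₁, …, b_n > 0 and α₁, …, α_n > 0 satisfy 2(α₁ − α_j)² ≥ max_{1 ≤ i ≤ n} (α_i − α_j)² for all j ≥ 2, and define g(t) = b₁ e^{−α₁ t} − Σ_{i=2}^n b_i e^{−α_i t}. Then g(t) ≥ 0 for all t ≥ 0 if and only if g restricted to [0,∞) is log-concave on [0,∞). In particular, if g(t) ≥ 0 for all t ≥ 0, then g'(t)² − g(t)·g''(t) ≥ 0 for all t ≥ 0. -/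
/-!
Write `g(t) = e^{-a₀t} h(t)` with `h(t) = b₀ - ∑ bᵢ e^{(a₀ - aᵢ)t}`. As a constant minus a
nonnegative combination of exponentials, `h` is concave; a nonnegative concave function is
log-concave by the weighted AM–GM inequality, and multiplying by the log-affine factor `e^{-a₀t}`
preserves log-concavity. For the differential inequality, with `xᵢ = bᵢ e^{-aᵢt}` one has
`g'² - g g'' = g · ∑ (a₀ - aᵢ)² xᵢ + (a₀ ∑ xᵢ - ∑ aᵢ xᵢ)²`, which is nonnegative where `g` is.
-/

open Real Finset

theorem ConcaveOn.logConcaveOn {S : Set ℝ} {f : ℝ → ℝ} (hf : ConcaveOn ℝ S f)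
    (hf₀ : ∀ x ∈ S, 0 ≤ f x) : LogConcaveOn S f := by
  refine ⟨hf₀, fun x hx y hy l hl₀ hl₁ => ?_⟩
  calc f x ^ l * f y ^ (1 - l) ≤ l * f x + (1 - l) * f y :=
        geom_mean_le_arith_mean2_weighted hl₀ (sub_nonneg.2 hl₁) (hf₀ x hx) (hf₀ y hy)
          (add_sub_cancel _ _)
    _ ≤ f (l * x + (1 - l) * y) :=
        hf.2 hx hy hl₀ (sub_nonneg.2 hl₁) (add_sub_cancel _ _)

theorem LogConcaveOn.mul {S : Set ℝ} {f g : ℝ → ℝ} (hf : LogConcaveOn S f)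
    (hg : LogConcaveOn S g) : LogConcaveOn S fun t => f t * g t := by
  refine ⟨fun x hx => mul_nonneg (hf.1 x hx) (hg.1 x hx), fun x hx y hy l hl₀ hl₁ => ?_⟩
  have hfl := hf.2 x hx y hy l hl₀ hl₁
  calc (f x * g x) ^ l * (f y * g y) ^ (1 - l)
      = (f x ^ l * f y ^ (1 - l)) * (g x ^ l * g y ^ (1 - l)) := by
        rw [mul_rpow (hf.1 x hx) (hg.1 x hx), mul_rpow (hf.1 y hy) (hg.1 y hy)]
        ring
    _ ≤ f (l * x + (1 - l) * y) * g (l * x + (1 - l) * y) :=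
        mul_le_mul hfl (hg.2 x hx y hy l hl₀ hl₁)
          (mul_nonneg (rpow_nonneg (hg.1 x hx) _) (rpow_nonneg (hg.1 y hy) _))
          ((mul_nonneg (rpow_nonneg (hf.1 x hx) _) (rpow_nonneg (hf.1 y hy) _)).trans hfl)

theorem logConcaveOn_exp_mul (S : Set ℝ) (c : ℝ) : LogConcaveOn S fun t => exp (c * t) := by
  refine ⟨fun x _ => (exp_pos _).le, fun x _ y _ l _ _ => le_of_eq ?_⟩
  rw [← exp_mul, ← exp_mul, ← exp_add]
  ring_nf

theorem convexOn_sum {𝕜 E β ι : Type*} [Semiring 𝕜] [PartialOrder 𝕜] [AddCommMonoid E]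
    [AddCommMonoid β] [PartialOrder β] [IsOrderedAddMonoid β] [SMul 𝕜 E] [Module 𝕜 β]
    {s : Set E} (hs : Convex 𝕜 s) (t : Finset ι) {f : ι → E → β}
    (hf : ∀ i ∈ t, ConvexOn 𝕜 s (f i)) : ConvexOn 𝕜 s fun x => ∑ i ∈ t, f i x := by
  induction t using Finset.cons_induction with
  | empty => simpa only [sum_empty] using convexOn_const (0 : β) hs
  | cons i t hi ih =>
    simp_rw [sum_cons]
    exact (hf i (mem_cons_self i t)).add (ih fun j hj => hf j (mem_cons_of_mem hj))

theorem concaveOn_const_sub_sum_mul_exp {ι : Type*} (s : Finset ι) (c : ℝ) {b : ι → ℝ}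
    (hb : ∀ i ∈ s, 0 ≤ b i) (d : ι → ℝ) :
    ConcaveOn ℝ Set.univ fun t => c - ∑ i ∈ s, b i * exp (d i * t) :=
  (concaveOn_const c convex_univ).sub <| convexOn_sum convex_univ s fun i hi =>
    (convexOn_exp.comp_linearMap (LinearMap.mul ℝ ℝ (d i))).smul (hb i hi)

theorem sub_sum_mul_sub_sum_le_sq {ι : Type*} (s : Finset ι) {x₀ : ℝ} {x : ι → ℝ}
    (hx : ∀ i ∈ s, 0 ≤ x i) (hsum : ∑ i ∈ s, x i ≤ x₀) (c₀ : ℝ) (c : ι → ℝ) :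
    (x₀ - ∑ i ∈ s, x i) * (c₀ ^ 2 * x₀ - ∑ i ∈ s, c i ^ 2 * x i) ≤
      (c₀ * x₀ - ∑ i ∈ s, c i * x i) ^ 2 := by
  have hdev : ∑ i ∈ s, (c₀ - c i) ^ 2 * x i =
      c₀ ^ 2 * ∑ i ∈ s, x i - 2 * c₀ * ∑ i ∈ s, c i * x i + ∑ i ∈ s, c i ^ 2 * x i := by
    simp only [mul_sum, ← sum_sub_distrib, ← sum_add_distrib]
    exact sum_congr rfl fun i _ => by ring
  have key : (c₀ * x₀ - ∑ i ∈ s, c i * x i) ^ 2 -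
      (x₀ - ∑ i ∈ s, x i) * (c₀ ^ 2 * x₀ - ∑ i ∈ s, c i ^ 2 * x i) =
      (x₀ - ∑ i ∈ s, x i) * ∑ i ∈ s, (c₀ - c i) ^ 2 * x i +
        (c₀ * ∑ i ∈ s, x i - ∑ i ∈ s, c i * x i) ^ 2 := by
    rw [hdev]; ring
  have hdev_nonneg : 0 ≤ ∑ i ∈ s, (c₀ - c i) ^ 2 * x i :=
    sum_nonneg fun i hi => mul_nonneg (sq_nonneg _) (hx i hi)
  rw [← sub_nonneg, key]
  exact add_nonneg (mul_nonneg (sub_nonneg.2 hsum) hdev_nonneg) (sq_nonneg _)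

noncomputable def expDiff {ι : Type*} (b₀ a₀ : ℝ) (s : Finset ι) (b a : ι → ℝ) (t : ℝ) : ℝ :=
  b₀ * exp (-a₀ * t) - ∑ i ∈ s, b i * exp (-a i * t)

section expDiff

variable {ι : Type*} {b₀ a₀ : ℝ} {s : Finset ι} {b a : ι → ℝ}

theorem expDiff_eq_exp_mul (t : ℝ) :
    expDiff b₀ a₀ s b a t = exp (-a₀ * t) * (b₀ - ∑ i ∈ s, b i * exp ((a₀ - a i) * t)) := by
  simp only [expDiff, mul_sub, mul_sum]
  congr 1
  · ring
  · refine sum_congr rfl fun i _ => ?_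
    rw [mul_left_comm, ← exp_add]
    ring_nf

theorem logConcaveOn_expDiff {S : Set ℝ} (hS : Convex ℝ S) (hb : ∀ i ∈ s, 0 ≤ b i)
    (hnonneg : ∀ t ∈ S, 0 ≤ expDiff b₀ a₀ s b a t) : LogConcaveOn S (expDiff b₀ a₀ s b a) := by
  rw [show expDiff b₀ a₀ s b a = _ from funext expDiff_eq_exp_mul]
  refine (logConcaveOn_exp_mul S (-a₀)).mul <|
    ((concaveOn_const_sub_sum_mul_exp s b₀ hb _).subset (Set.subset_univ S) hS).logConcaveOn
      fun t ht => ?_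
  have h := hnonneg t ht
  rw [expDiff_eq_exp_mul] at h
  exact (mul_nonneg_iff_of_pos_left (exp_pos _)).1 h

theorem hasDerivAt_expDiff (t : ℝ) :
    HasDerivAt (expDiff b₀ a₀ s b a) (expDiff (-a₀ * b₀) a₀ s (fun i => -a i * b i) a t) t := by
  have hterm : ∀ β α : ℝ, HasDerivAt (fun u => β * exp (-α * u)) (-α * β * exp (-α * t)) t :=
    fun β α => by simpa [mul_comm, mul_left_comm, mul_assoc] using
      (((hasDerivAt_id t).const_mul (-α)).exp).const_mul β
  exact (hterm b₀ a₀).sub (HasDerivAt.fun_sum fun i _ => hterm (b i) (a i))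

theorem deriv_expDiff :
    deriv (expDiff b₀ a₀ s b a) = expDiff (-a₀ * b₀) a₀ s (fun i => -a i * b i) a :=
  funext fun t => (hasDerivAt_expDiff t).deriv

theorem deriv_sq_sub_mul_deriv_deriv_expDiff_nonneg (hb : ∀ i ∈ s, 0 ≤ b i) {t : ℝ}
    (ht : 0 ≤ expDiff b₀ a₀ s b a t) :
    0 ≤ deriv (expDiff b₀ a₀ s b a) t ^ 2 -
      expDiff b₀ a₀ s b a t * deriv (deriv (expDiff b₀ a₀ s b a)) t := by
  have hx : ∀ i ∈ s, 0 ≤ b i * exp (-a i * t) := fun i hi => mul_nonneg (hb i hi) (exp_pos _).le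
  rw [deriv_expDiff, deriv_expDiff, sub_nonneg]
  convert sub_sum_mul_sub_sum_le_sq s hx (sub_nonneg.1 ht) (-a₀) (fun i => -a i) using 1 <;>
    simp only [expDiff, sq, mul_assoc]

end expDiff

theorem difference_positive_iff_log_concave_general {n : ℕ}
    (b a : Fin (n + 1) → ℝ) (hb : ∀ i, 0 < b i) :
    let g : ℝ → ℝ := fun t =>
      b 0 * Real.exp (-a 0 * t) -
        ∑ i ∈ Finset.univ.erase 0, b i * Real.exp (-a i * t)
    ((∀ t : ℝ, 0 ≤ t → 0 ≤ g t) ↔ LogConcaveOn (Set.Ici 0) g) ∧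
      ((∀ t : ℝ, 0 ≤ t → 0 ≤ g t) →
        ∀ t : ℝ, 0 ≤ t → 0 ≤ deriv g t ^ 2 - g t * deriv (deriv g) t) := by
  intro g
  have hb' : ∀ i ∈ univ.erase 0, 0 ≤ b i := fun i _ => (hb i).le
  exact ⟨⟨fun hg => logConcaveOn_expDiff (convex_Ici 0) hb' hg, fun hg t => hg.1 t⟩,
    fun hg t ht => deriv_sq_sub_mul_deriv_deriv_expDiff_nonneg hb' (hg t ht)⟩

/-- A difference of positive first-order systems,
`g(t) = b₀ e^{−α₀ t} − Σ_{i≠0} bᵢ e^{−αᵢ t}`, satisfying the spread condition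
`2(α₀ − αⱼ)² ≥ maxᵢ (αᵢ − αⱼ)²` for all `j ≠ 0`, is nonnegative on `[0,∞)` if
and only if it is log-concave on `[0,∞)`; in particular nonnegativity implies
`g'(t)² − g(t)·g''(t) ≥ 0` on `[0,∞)`. -/
theorem difference_positive_iff_log_concave {n : ℕ}
    (b a : Fin (n + 1) → ℝ) (hb : ∀ i, 0 < b i) (ha : ∀ i, 0 < a i)
    (hspread : ∀ j : Fin (n + 1), j ≠ 0 →
      ∀ i : Fin (n + 1), (a i - a j) ^ 2 ≤ 2 * (a 0 - a j) ^ 2) :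
    let g : ℝ → ℝ := fun t =>
      b 0 * Real.exp (-a 0 * t) -
        ∑ i ∈ Finset.univ.erase 0, b i * Real.exp (-a i * t)
    ((∀ t : ℝ, 0 ≤ t → 0 ≤ g t) ↔ LogConcaveOn (Set.Ici 0) g) ∧
      ((∀ t : ℝ, 0 ≤ t → 0 ≤ g t) →
        ∀ t : ℝ, 0 ≤ t → 0 ≤ deriv g t ^ 2 - g t * deriv (deriv g) t) :=
  difference_positive_iff_log_concave_general b a hb
end
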